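/- arXiv:1712.10024 — 4 statements merged into one kernel-verified Lean document; each statement's English description precedes it below -/
import Mathlib

section
/- Let Y_L ≤ Y ≤ Y_U a.s. be real random variables, V an ℝ^d-valued random variable, and Σ an invertible d×d matrix, all with finite second moments. Define the identified set 𝓑 = {Σ⁻¹ E[V Y'] : Y' measurable with Y_L ≤ Y' ≤ Y_U a.s.}. Then for every unit vector q ∈ S^{d-1}, the support function σ(q,𝓑) = sup_{b ∈ 𝓑} ⟪q, b⟫ equals E[z_q · (Y_L + (Y_U − Y_L)·1{z_q > 0})], where z_q = ⟪q, Σ⁻¹ V⟫, provided P(z_q = 0) = 0. -/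
open MeasureTheory Matrix
open scoped Classical

/-!
The map `Y' ↦ ⟪q, Σ⁻¹ E[V Y']⟫ = E[z_q Y']` is linear in `Y'`, and pointwise
`z_q Y' ≤ z_q Y*` for the bang-bang selection `Y* = Y_U` on `{z_q > 0}` and `Y* = Y_L` elsewhere.
Since `Y*` is itself admissible, the supremum is attained at `Y*`.
-/

lemma mul_le_ite_pos_mul {a b y : ℝ} (hay : a ≤ y) (hyb : y ≤ b) (z : ℝ) :
    y * z ≤ (if 0 < z then b else a) * z := by
  split_ifs with hz
  · exact mul_le_mul_of_nonneg_right hyb hz.le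
  · exact mul_le_mul_of_nonpos_right hay (not_lt.mp hz)

namespace ContinuousLinearMap

variable {Ω E : Type*} [MeasurableSpace Ω] {μ : Measure Ω}
  [NormedAddCommGroup E] [NormedSpace ℝ E] (ℓ : E →L[ℝ] ℝ) {f : Ω → ℝ} {V : Ω → E}

lemma integrable_mul_apply (h : Integrable (fun ω => f ω • V ω) μ) :
    Integrable (fun ω => f ω * ℓ (V ω)) μ := by
  simpa only [map_smul, smul_eq_mul] using ℓ.integrable_comp h

lemma apply_integral_smul [CompleteSpace E] (h : Integrable (fun ω => f ω • V ω) μ) :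
    ℓ (∫ ω, f ω • V ω ∂μ) = ∫ ω, f ω * ℓ (V ω) ∂μ := by
  rw [← ℓ.integral_comp_comm h]
  simp only [map_smul, smul_eq_mul]

end ContinuousLinearMap

theorem isGreatest_apply_integral_smul_of_bounds {Ω E : Type*} [MeasurableSpace Ω]
    (μ : Measure Ω) [NormedAddCommGroup E] [NormedSpace ℝ E] [CompleteSpace E]
    [MeasurableSpace E] [OpensMeasurableSpace E] (ℓ : E →L[ℝ] ℝ)
    {V : Ω → E} {YL YU : Ω → ℝ} (hV : Measurable V) (hL : Measurable YL) (hU : Measurable YU)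
    (hLU : ∀ᵐ ω ∂μ, YL ω ≤ YU ω)
    (hint : ∀ Y' : Ω → ℝ, Measurable Y' →
      (∀ᵐ ω ∂μ, YL ω ≤ Y' ω ∧ Y' ω ≤ YU ω) → Integrable (fun ω => Y' ω • V ω) μ) :
    IsGreatest {r : ℝ | ∃ Y' : Ω → ℝ, Measurable Y' ∧
        (∀ᵐ ω ∂μ, YL ω ≤ Y' ω ∧ Y' ω ≤ YU ω) ∧ r = ℓ (∫ ω, Y' ω • V ω ∂μ)}
      (∫ ω, (if 0 < ℓ (V ω) then YU ω else YL ω) * ℓ (V ω) ∂μ) := by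
  set Ystar : Ω → ℝ := fun ω => if 0 < ℓ (V ω) then YU ω else YL ω
  have hYstar : Measurable Ystar :=
    Measurable.ite (measurableSet_lt measurable_const (ℓ.measurable.comp hV)) hU hL
  have hYstar_bounds : ∀ᵐ ω ∂μ, YL ω ≤ Ystar ω ∧ Ystar ω ≤ YU ω := by
    filter_upwards [hLU] with ω h
    by_cases hz : 0 < ℓ (V ω) <;> simp [Ystar, hz, h]
  have hint_star := hint Ystar hYstar hYstar_bounds
  refine ⟨⟨Ystar, hYstar, hYstar_bounds, (ℓ.apply_integral_smul hint_star).symm⟩, ?_⟩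
  rintro _ ⟨Y', hY', hbounds, rfl⟩
  rw [ℓ.apply_integral_smul (hint Y' hY' hbounds)]
  refine integral_mono_ae (ℓ.integrable_mul_apply (hint Y' hY' hbounds))
    (ℓ.integrable_mul_apply hint_star) ?_
  filter_upwards [hbounds] with ω h
  exact mul_le_ite_pos_mul h.1 h.2 _

theorem stmt_0_general {Ω : Type*} [MeasurableSpace Ω] (μ : Measure Ω)
    (d : ℕ) (V : Ω → Fin d → ℝ) (Y YL YU : Ω → ℝ)
    (S : Matrix (Fin d) (Fin d) ℝ)
    (hmV : Measurable V) (hmL : Measurable YL) (hmU : Measurable YU)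
    (hbound : ∀ᵐ ω ∂μ, YL ω ≤ Y ω ∧ Y ω ≤ YU ω)
    (hint : ∀ Y' : Ω → ℝ, Measurable Y' →
      (∀ᵐ ω ∂μ, YL ω ≤ Y' ω ∧ Y' ω ≤ YU ω) → Integrable (fun ω => Y' ω • V ω) μ)
    (q : Fin d → ℝ) :
    sSup {r : ℝ | ∃ Y' : Ω → ℝ, Measurable Y' ∧
        (∀ᵐ ω ∂μ, YL ω ≤ Y' ω ∧ Y' ω ≤ YU ω) ∧
        r = q ⬝ᵥ S⁻¹.mulVec (∫ ω, Y' ω • V ω ∂μ)}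
      = ∫ ω, (q ⬝ᵥ S⁻¹.mulVec (V ω)) *
          (YL ω + (YU ω - YL ω) * (if 0 < q ⬝ᵥ S⁻¹.mulVec (V ω) then (1:ℝ) else 0)) ∂μ := by
  let ℓ : (Fin d → ℝ) →L[ℝ] ℝ :=
    LinearMap.toContinuousLinearMap ((dotProductBilin ℝ ℝ q).comp (mulVecLin S⁻¹))
  have hℓ (b : Fin d → ℝ) : ℓ b = q ⬝ᵥ S⁻¹ *ᵥ b := rfl
  refine (isGreatest_apply_integral_smul_of_bounds μ ℓ hmV hmL hmU
    (hbound.mono fun _ h => h.1.trans h.2) hint).csSup_eq.trans (integral_congr_ae ?_)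
  refine Filter.Eventually.of_forall fun ω => ?_
  simp only [hℓ]
  split_ifs <;> ring

/-- Support-function representation of the identified set: for the identified set
`𝓑 = {Σ⁻¹ E[V Y'] : Y' measurable, Y_L ≤ Y' ≤ Y_U a.s.}` and a unit direction `q`,
the support function `σ(q,𝓑) = sup_{b ∈ 𝓑} ⟪q, b⟫` equals
`E[z_q (Y_L + (Y_U − Y_L) 1{z_q > 0})]` where `z_q = ⟪q, Σ⁻¹ V⟫`,
provided `P(z_q = 0) = 0`. -/
theorem stmt_0 {Ω : Type*} [MeasurableSpace Ω] (μ : Measure Ω) [IsProbabilityMeasure μ]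
    (d : ℕ) (V : Ω → Fin d → ℝ) (Y YL YU : Ω → ℝ)
    (S : Matrix (Fin d) (Fin d) ℝ) (hS : IsUnit S)
    (hmV : Measurable V) (hmY : Measurable Y) (hmL : Measurable YL) (hmU : Measurable YU)
    (hbound : ∀ᵐ ω ∂μ, YL ω ≤ Y ω ∧ Y ω ≤ YU ω)
    (hint : ∀ Y' : Ω → ℝ, Measurable Y' →
      (∀ᵐ ω ∂μ, YL ω ≤ Y' ω ∧ Y' ω ≤ YU ω) → Integrable (fun ω => Y' ω • V ω) μ)
    (q : Fin d → ℝ) (hq : ∑ i, (q i) ^ 2 = 1)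
    (hz0 : μ {ω | q ⬝ᵥ S⁻¹.mulVec (V ω) = 0} = 0)
    (hrhs : Integrable (fun ω => (q ⬝ᵥ S⁻¹.mulVec (V ω)) *
      (YL ω + (YU ω - YL ω) * (if 0 < q ⬝ᵥ S⁻¹.mulVec (V ω) then (1:ℝ) else 0))) μ) :
    sSup {r : ℝ | ∃ Y' : Ω → ℝ, Measurable Y' ∧
        (∀ᵐ ω ∂μ, YL ω ≤ Y' ω ∧ Y' ω ≤ YU ω) ∧
        r = q ⬝ᵥ S⁻¹.mulVec (∫ ω, Y' ω • V ω ∂μ)}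
      = ∫ ω, (q ⬝ᵥ S⁻¹.mulVec (V ω)) *
          (YL ω + (YU ω - YL ω) * (if 0 < q ⬝ᵥ S⁻¹.mulVec (V ω) then (1:ℝ) else 0)) ∂μ :=
  stmt_0_general μ d V Y YL YU S hmV hmL hmU hbound hint q
end

section
/- (Orthogonality of the doubly-robust moment for a conditional expectation nuisance.) Let W = (U, X, Z) be random variables, m(W, η) a moment function affine in a real nuisance η = η(X) whose true value is η₀(X) = E[U | X], and define γ₀(X) = ∂_η E[m(W, η₀)|X]. Set g(W, ξ) = m(W, η) + γ(X)(U − η(X)) with ξ = (η, γ). Then the Gateaux derivative of ξ ↦ E[g(W, ξ)] at ξ₀ = (η₀, γ₀) is zero in every square-integrable direction (η − η₀, γ − γ₀). -/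
/-!
The perturbed objective is a quadratic polynomial in `r`, so its derivative at `0` is the
integral of the linear coefficient `(η - η₀)(b - γ₀) + (γ - γ₀)(U - η₀)`,
where `η₀ = E[U|m]` and `γ₀ = E[b|m]`.
Both terms vanish: an `L²` conditional-expectation residual is orthogonal to every
square-integrable `m`-measurable function.
-/

open MeasureTheory

section

variable {Ω : Type*} {m m0 : MeasurableSpace Ω} {μ : Measure Ω}

theorem integral_mul_sub_condExp_eq_zero (hm : m ≤ m0) [IsFiniteMeasure μ] {f g : Ω → ℝ}
    (hfm : StronglyMeasurable[m] f) (hf : MemLp f 2 μ) (hg : MemLp g 2 μ) :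
    ∫ ω, f ω * (g ω - (μ[g | m]) ω) ∂μ = 0 := by
  have hfg : Integrable (fun ω => f ω * g ω) μ := hf.integrable_mul hg
  have hfcg : Integrable (fun ω => f ω * (μ[g | m]) ω) μ :=
    hf.integrable_mul (hg.condExp one_le_two)
  have pull_out : ∫ ω, f ω * g ω ∂μ = ∫ ω, f ω * (μ[g | m]) ω ∂μ :=
    calc ∫ ω, (f * g) ω ∂μ = ∫ ω, (μ[f * g | m]) ω ∂μ := (integral_condExp hm).symm
      _ = ∫ ω, (f * μ[g | m]) ω ∂μ := integral_congr_ae <|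
        condExp_mul_of_stronglyMeasurable_left hfm hfg (hg.integrable one_le_two)
  simp_rw [mul_sub]
  rw [integral_sub hfg hfcg, pull_out, sub_self]

theorem hasDerivAt_integral_add_mul_add_sq_mul {P Q R : Ω → ℝ} (hP : Integrable P μ)
    (hQ : Integrable Q μ) (hR : Integrable R μ) (r₀ : ℝ) :
    HasDerivAt (fun r : ℝ => ∫ ω, P ω + r * Q ω + r ^ 2 * R ω ∂μ)
      ((∫ ω, Q ω ∂μ) + 2 * r₀ * ∫ ω, R ω ∂μ) r₀ := by
  have expand : (fun r : ℝ => ∫ ω, P ω + r * Q ω + r ^ 2 * R ω ∂μ) =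
      fun r => (∫ ω, P ω ∂μ) + r * (∫ ω, Q ω ∂μ) + r ^ 2 * ∫ ω, R ω ∂μ := by
    funext r
    have hPQ : Integrable (fun ω => P ω + r * Q ω) μ := hP.add (hQ.const_mul r)
    rw [integral_add hPQ (hR.const_mul _), integral_add hP (hQ.const_mul r),
      integral_const_mul, integral_const_mul]
  have hpoly := (((hasDerivAt_id' r₀).mul_const (∫ ω, Q ω ∂μ)).add
    ((hasDerivAt_pow 2 r₀).mul_const (∫ ω, R ω ∂μ))).const_add (∫ ω, P ω ∂μ)
  rw [expand]
  refine hpoly.congr_deriv (by norm_num) |>.congr_of_eventuallyEq (.of_forall fun r => ?_)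
  simp only [Pi.add_apply]
  ring

end

/-- Orthogonality of the doubly-robust moment for a conditional-expectation nuisance:
for a moment function `m(W, t) = a(W) + b(W) t` affine in the scalar nuisance value `t`,
with true nuisance `η₀(X) = E[U|X]` and `γ₀(X) = ∂_η E[m(W,η₀)|X] = E[b|X]`, the map
`ξ = (η, γ) ↦ E[m(W, η(X)) + γ(X)(U − η(X))]` has zero Gateaux derivative at
`ξ₀ = (η₀, γ₀)` in every square-integrable `m`-measurable direction `(η − η₀, γ − γ₀)`. -/
theorem stmt_4 {Ω : Type*} {m m0 : MeasurableSpace Ω} (hm : m ≤ m0)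
    (μ : Measure Ω) [IsProbabilityMeasure μ]
    (U a b : Ω → ℝ) (mfun : Ω → ℝ → ℝ)
    (haff : ∀ ω t, mfun ω t = a ω + b ω * t)
    (hU2 : MemLp U 2 μ) (ha1 : Integrable a μ) (hb2 : MemLp b 2 μ)
    (η γ : Ω → ℝ)
    (hηm : Measurable[m] η) (hγm : Measurable[m] γ)
    (hη2 : MemLp η 2 μ) (hγ2 : MemLp γ 2 μ) :
    HasDerivAt (fun r : ℝ =>
        ∫ ω, (mfun ω ((μ[U | m]) ω + r * (η ω - (μ[U | m]) ω))
          + ((μ[b | m]) ω + r * (γ ω - (μ[b | m]) ω)) *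
              (U ω - ((μ[U | m]) ω + r * (η ω - (μ[U | m]) ω)))) ∂μ)
      0 0 := by
  set η₀ := μ[U | m]
  set γ₀ := μ[b | m]
  have hη₀ : MemLp η₀ 2 μ := hU2.condExp one_le_two
  have hγ₀ : MemLp γ₀ 2 μ := hb2.condExp one_le_two
  have hdη : MemLp (fun ω => η ω - η₀ ω) 2 μ := hη2.sub hη₀
  have hdγ : MemLp (fun ω => γ ω - γ₀ ω) 2 μ := hγ2.sub hγ₀
  have hdηm : StronglyMeasurable[m] (fun ω => η ω - η₀ ω) :=
    hηm.stronglyMeasurable.sub stronglyMeasurable_condExp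
  have hdγm : StronglyMeasurable[m] (fun ω => γ ω - γ₀ ω) :=
    hγm.stronglyMeasurable.sub stronglyMeasurable_condExp
  have hdηb : Integrable (fun ω => (η ω - η₀ ω) * (b ω - γ₀ ω)) μ :=
    hdη.integrable_mul (hb2.sub hγ₀)
  have hdγU : Integrable (fun ω => (γ ω - γ₀ ω) * (U ω - η₀ ω)) μ :=
    hdγ.integrable_mul (hU2.sub hη₀)
  have orthogonal :
      ∫ ω, (η ω - η₀ ω) * (b ω - γ₀ ω) + (γ ω - γ₀ ω) * (U ω - η₀ ω) ∂μ = 0 := by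
    rw [integral_add hdηb hdγU, integral_mul_sub_condExp_eq_zero hm hdηm hdη hb2,
      integral_mul_sub_condExp_eq_zero hm hdγm hdγ hU2, add_zero]
  have quadratic := hasDerivAt_integral_add_mul_add_sq_mul
    (P := fun ω => a ω + b ω * η₀ ω + γ₀ ω * (U ω - η₀ ω))
    (Q := fun ω => (η ω - η₀ ω) * (b ω - γ₀ ω) + (γ ω - γ₀ ω) * (U ω - η₀ ω))
    (R := fun ω => -((γ ω - γ₀ ω) * (η ω - η₀ ω)))
    ((ha1.add (hb2.integrable_mul hη₀)).add (hγ₀.integrable_mul (hU2.sub hη₀)))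
    (hdηb.add hdγU)
    (hdγ.integrable_mul hdη).neg 0
  rw [orthogonal, mul_zero, zero_mul, add_zero] at quadratic
  convert quadratic using 4 with r ω
  rw [haff]
  ring
end

section
/- (Lee-bound representation.) Let D ∈ {0,1}, S ∈ {0,1}, Y real, X random, with 0 < P(D=1|X) < 1 a.s. and P(D=0, S=1) > 0. Let s(d,x) = P(S=1|D=d,X=x), p₀(x) = s(0,x)/s(1,x) ∈ (0,1], and let y_{u,x} denote the conditional u-quantile of Y given D=1, S=1, X=x (with Y conditionally continuous). Then ∫ f(x|D=0,S=1) E[Y | D=1, S=1, Y ≤ y_{p₀(x),x}, X=x] dx = E[ D·S·Y·1{Y ≤ y_{p₀(X),X}}·P(D=0|X) / (P(D=0,S=1)·P(D=1|X)) ]. -/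
open MeasureTheory
open scoped Classical

/-!
The weight `w = (1 - π) / (P01 π)` is unbounded where `π → 0`, so the tower identities, which are
assumed only for bounded test functions, are applied to `w φ` with `φ = 1{|w| ≤ n}`. For such `φ`,
`E[D S Y 1{Y ≤ yq} w φ] = E[D S mq w φ] = E[π s1 mq w φ] = E[(1 - π) s0 T φ] / P01 = ∫ fX T φ dν`,
the middle step being `s1 mq = s1 p0 T = s0 T`. Letting `n → ∞` on both sides gives the claim.
-/

open Set

theorem exists_abs_mul_le {α : Type*} {f g : α → ℝ} (hf : ∃ C, ∀ x, |f x| ≤ C)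
    (hg : ∃ C, ∀ x, |g x| ≤ C) : ∃ C, ∀ x, |f x * g x| ≤ C := by
  obtain ⟨C, hC⟩ := hf
  obtain ⟨D, hD⟩ := hg
  exact ⟨C * D, fun x => (abs_mul _ _).trans_le <|
    mul_le_mul (hC x) (hD x) (abs_nonneg _) ((abs_nonneg _).trans (hC x))⟩

theorem integral_mul_indicator_one {α : Type*} [MeasurableSpace α] (μ : Measure α) (f : α → ℝ)
    {s : Set α} (hs : MeasurableSet s) :
    ∫ a, f a * s.indicator 1 a ∂μ = ∫ a in s, f a ∂μ := by
  rw [← integral_indicator hs]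
  congr with a
  by_cases ha : a ∈ s <;> simp [ha]

theorem integral_eq_of_forall_bounded_test {Ω 𝒳 : Type*} [MeasurableSpace Ω]
    [MeasurableSpace 𝒳] {μ : Measure Ω} {ν : Measure 𝒳} {X : Ω → 𝒳} {F : Ω → ℝ}
    {G w : 𝒳 → ℝ} (hX : Measurable X) (hw : Measurable w) (hF : Integrable F μ)
    (hG : Integrable G ν)
    (h : ∀ φ : 𝒳 → ℝ, Measurable φ → (∃ C, ∀ x, |φ x| ≤ C) →
      (∃ C, ∀ x, |w x * φ x| ≤ C) → ∫ ω, F ω * φ (X ω) ∂μ = ∫ x, G x * φ x ∂ν) :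
    ∫ ω, F ω ∂μ = ∫ x, G x ∂ν := by
  set s : ℕ → Set 𝒳 := fun n => {x | |w x| ≤ n}
  have hs (n : ℕ) : MeasurableSet (s n) := measurableSet_le hw.abs measurable_const
  have hmono : Monotone s := fun m n hmn x (hx : |w x| ≤ m) =>
    show |w x| ≤ n from hx.trans (Nat.cast_le.2 hmn)
  have hcover : ⋃ n, s n = univ :=
    eq_univ_of_forall fun x => mem_iUnion.2 (exists_nat_ge |w x|)
  have hΩ := tendsto_setIntegral_of_monotone (μ := μ) (f := F) (fun n => hX (hs n))
    (fun m n hmn => preimage_mono (hmono hmn))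
    (by rw [← preimage_iUnion, hcover]; exact hF.integrableOn)
  have h𝒳 := tendsto_setIntegral_of_monotone (μ := ν) (f := G) hs hmono
    (by rw [hcover]; exact hG.integrableOn)
  rw [← preimage_iUnion, hcover, preimage_univ, setIntegral_univ] at hΩ
  rw [hcover, setIntegral_univ] at h𝒳
  refine tendsto_nhds_unique (hΩ.congr fun n => ?_) h𝒳
  rw [← integral_mul_indicator_one _ _ (hX (hs n)), ← integral_mul_indicator_one _ _ (hs n)]
  refine h _ (measurable_one.indicator (hs n)) ⟨1, fun x => ?_⟩ ⟨n, fun x => ?_⟩ <;>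
    by_cases hx : x ∈ s n <;> simp [hx]
  exact hx

theorem lee_weight_eq {π s0 s1 p0 mq T P : ℝ} (hπ : π ≠ 0) (hs1 : s1 ≠ 0) (hp0 : p0 = s0 / s1)
    (hp0ne : p0 ≠ 0) (hT : T = mq / p0) :
    π * s1 * (mq * ((1 - π) / (P * π))) = (1 - π) * s0 * T / P := by
  have hs0 : s0 ≠ 0 := by rintro rfl; simp [hp0] at hp0ne
  subst hT hp0
  rcases eq_or_ne P 0 with rfl | hP
  · simp
  · field_simp

theorem integral_truncated_mul_weight_eq {Ω 𝒳 : Type*} [MeasurableSpace Ω]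
    [MeasurableSpace 𝒳] {μ : Measure Ω} {ν : Measure 𝒳} {X : Ω → 𝒳} {ID IS Y : Ω → ℝ}
    {π s0 s1 yq fX T mq w φ : 𝒳 → ℝ} {P01 : ℝ}
    (hmT : Measurable T) (hmmq : Measurable mq) (hmw : Measurable w)
    (hTbd : ∃ C, ∀ x, |T x| ≤ C) (hmqbd : ∃ C, ∀ x, |mq x| ≤ C) (hP01 : P01 ≠ 0)
    (hweight : ∀ x, π x * s1 x * (mq x * w x) = (1 - π x) * s0 x * T x / P01)
    (hD1S1 : ∀ g : 𝒳 → ℝ, Measurable g → (∃ C, ∀ x, |g x| ≤ C) →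
      ∫ ω, ID ω * IS ω * g (X ω) ∂μ = ∫ ω, π (X ω) * s1 (X ω) * g (X ω) ∂μ)
    (hD0S1 : ∀ g : 𝒳 → ℝ, Measurable g → (∃ C, ∀ x, |g x| ≤ C) →
      ∫ ω, (1 - ID ω) * IS ω * g (X ω) ∂μ
        = ∫ ω, (1 - π (X ω)) * s0 (X ω) * g (X ω) ∂μ)
    (hmq : ∀ g : 𝒳 → ℝ, Measurable g → (∃ C, ∀ x, |g x| ≤ C) →
      ∫ ω, ID ω * IS ω * Y ω * (if Y ω ≤ yq (X ω) then (1:ℝ) else 0) * g (X ω) ∂μ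
        = ∫ ω, ID ω * IS ω * mq (X ω) * g (X ω) ∂μ)
    (hfX : ∀ g : 𝒳 → ℝ, Measurable g → (∃ C, ∀ x, |g x| ≤ C) →
      ∫ ω, (1 - ID ω) * IS ω * g (X ω) ∂μ = P01 * ∫ x, g x * fX x ∂ν)
    (hφ : Measurable φ) (hφbd : ∃ C, ∀ x, |φ x| ≤ C) (hwφbd : ∃ C, ∀ x, |w x * φ x| ≤ C) :
    ∫ ω, ID ω * IS ω * Y ω * (if Y ω ≤ yq (X ω) then (1:ℝ) else 0) * w (X ω) * φ (X ω) ∂μ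
      = ∫ x, fX x * T x * φ x ∂ν := by
  have hψ : Measurable fun x => T x * φ x / P01 := (hmT.mul hφ).div_const _
  have hψbd : ∃ C, ∀ x, |T x * φ x / P01| ≤ C := by
    obtain ⟨C, hC⟩ := exists_abs_mul_le hTbd hφbd
    exact ⟨C / |P01|, fun x => by rw [abs_div]; gcongr; exact hC x⟩
  calc _ = ∫ ω, ID ω * IS ω * Y ω * (if Y ω ≤ yq (X ω) then (1:ℝ) else 0) *
          (w (X ω) * φ (X ω)) ∂μ :=
        integral_congr_ae <| .of_forall fun ω => by simp only [mul_assoc]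
    _ = ∫ ω, ID ω * IS ω * mq (X ω) * (w (X ω) * φ (X ω)) ∂μ := hmq _ (hmw.mul hφ) hwφbd
    _ = ∫ ω, ID ω * IS ω * (mq (X ω) * (w (X ω) * φ (X ω))) ∂μ :=
        integral_congr_ae <| .of_forall fun ω => mul_assoc _ _ _
    _ = ∫ ω, π (X ω) * s1 (X ω) * (mq (X ω) * (w (X ω) * φ (X ω))) ∂μ :=
        hD1S1 _ (hmmq.mul (hmw.mul hφ)) (exists_abs_mul_le hmqbd hwφbd)
    _ = ∫ ω, (1 - π (X ω)) * s0 (X ω) * (T (X ω) * φ (X ω) / P01) ∂μ :=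
        integral_congr_ae <| .of_forall fun ω => by
          linear_combination φ (X ω) * hweight (X ω)
    _ = ∫ ω, (1 - ID ω) * IS ω * (T (X ω) * φ (X ω) / P01) ∂μ := (hD0S1 _ hψ hψbd).symm
    _ = P01 * ∫ x, T x * φ x / P01 * fX x ∂ν := hfX _ hψ hψbd
    _ = ∫ x, fX x * T x * φ x ∂ν := by
        rw [← integral_const_mul]
        congr with x
        field_simp

/-- `ID`, `IS` are the indicators of `D = 1`, `S = 1`; `π(x) = P(D=1|X=x)`,
`s0`, `s1` the selection probabilities `s(0,x)`, `s(1,x)`, `yq(x)` the conditional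
`p₀(x)`-quantile of `Y` given `D=1, S=1, X=x`, `mq(x) = E[Y 1{Y ≤ yq(x)}|D=1,S=1,X=x]`,
`T(x) = mq(x)/p₀(x)`, `P01 = P(D=0, S=1)`, and `fX` the `ν`-density of `X` given
`D=0, S=1`. -/
theorem stmt_12_general {Ω 𝒳 : Type*} [MeasurableSpace Ω] [MeasurableSpace 𝒳]
    (μ : Measure Ω) (ν : Measure 𝒳)
    (X : Ω → 𝒳) (ID IS Y : Ω → ℝ)
    (π s0 s1 p0 yq fX T mq : 𝒳 → ℝ) (P01 : ℝ)
    (hmX : Measurable X)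
    (hmπ : Measurable π)
    (hmT : Measurable T) (hmmq : Measurable mq)
    (hπ : ∀ x, 0 < π x ∧ π x < 1)
    (hs1 : ∀ x, 0 < s1 x)
    (hp0 : ∀ x, p0 x = s0 x / s1 x) (hp0' : ∀ x, 0 < p0 x ∧ p0 x ≤ 1)
    (hTbd : ∃ C, ∀ x, |T x| ≤ C)
    (hmqbd : ∃ C, ∀ x, |mq x| ≤ C)
    (hP01pos : 0 < P01)
    -- conditional-probability (tower) identities given `X`:
    (hD1S1 : ∀ g : 𝒳 → ℝ, Measurable g → (∃ C, ∀ x, |g x| ≤ C) →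
      ∫ ω, ID ω * IS ω * g (X ω) ∂μ = ∫ ω, π (X ω) * s1 (X ω) * g (X ω) ∂μ)
    (hD0S1 : ∀ g : 𝒳 → ℝ, Measurable g → (∃ C, ∀ x, |g x| ≤ C) →
      ∫ ω, (1 - ID ω) * IS ω * g (X ω) ∂μ
        = ∫ ω, (1 - π (X ω)) * s0 (X ω) * g (X ω) ∂μ)
    -- `mq(x)` is the truncated conditional mean of `Y` given `D=1, S=1, X=x`:
    (hmq : ∀ g : 𝒳 → ℝ, Measurable g → (∃ C, ∀ x, |g x| ≤ C) →
      ∫ ω, ID ω * IS ω * Y ω * (if Y ω ≤ yq (X ω) then (1:ℝ) else 0) * g (X ω) ∂μ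
        = ∫ ω, ID ω * IS ω * mq (X ω) * g (X ω) ∂μ)
    (hT : ∀ x, T x = mq x / p0 x)
    -- `fX` is the `ν`-density of `X` given `D=0, S=1`:
    (hfX : ∀ g : 𝒳 → ℝ, Measurable g → (∃ C, ∀ x, |g x| ≤ C) →
      ∫ ω, (1 - ID ω) * IS ω * g (X ω) ∂μ = P01 * ∫ x, g x * fX x ∂ν)
    (hintLHS : Integrable (fun x => fX x * T x) ν)
    (hintRHS : Integrable (fun ω => ID ω * IS ω * Y ω *
      (if Y ω ≤ yq (X ω) then (1:ℝ) else 0) * (1 - π (X ω))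
        / (P01 * π (X ω))) μ) :
    ∫ x, fX x * T x ∂ν
      = ∫ ω, ID ω * IS ω * Y ω * (if Y ω ≤ yq (X ω) then (1:ℝ) else 0) *
          (1 - π (X ω)) / (P01 * π (X ω)) ∂μ := by
  have hmw : Measurable fun x => (1 - π x) / (P01 * π x) :=
    (measurable_const.sub hmπ).div (measurable_const.mul hmπ)
  have hweight (x : 𝒳) := lee_weight_eq (P := P01) (hπ x).1.ne' (hs1 x).ne' (hp0 x)
    (hp0' x).1.ne' (hT x)
  simp_rw [mul_div_assoc] at hintRHS ⊢
  exact (integral_eq_of_forall_bounded_test hmX hmw hintRHS hintLHS fun φ hφ hφbd hwφbd =>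
    integral_truncated_mul_weight_eq hmT hmmq hmw hTbd hmqbd hP01pos.ne' hweight hD1S1 hD0S1
      hmq hfX hφ hφbd hwφbd).symm

/-- Lee-bound representation: with binary treatment indicator `ID`, binary selection
indicator `IS`, outcome `Y`, covariates `X`, propensity `π(x) = P(D=1|X=x)` strictly
between 0 and 1, selection probabilities `s(d,x)`, trimming proportion
`p₀(x) = s(0,x)/s(1,x)`, conditional `p₀(x)`-quantile `yq(x)` of `Y` given
`D=1, S=1, X=x`, truncated conditional mean `mq(x) = E[Y 1{Y ≤ yq(x)}|D=1,S=1,X=x]`,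
`T(x) = E[Y|D=1,S=1,Y ≤ yq(x),X=x] = mq(x)/p₀(x)`, and `fX` the density (w.r.t. `ν`)
of `X` given `D=0, S=1`:
`∫ fX(x) T(x) dν(x) = E[ D S Y 1{Y ≤ yq(X)} P(D=0|X) / (P(D=0,S=1) P(D=1|X)) ]`. -/
theorem stmt_12 {Ω 𝒳 : Type*} [MeasurableSpace Ω] [MeasurableSpace 𝒳]
    (μ : Measure Ω) [IsProbabilityMeasure μ] (ν : Measure 𝒳) [SigmaFinite ν]
    (X : Ω → 𝒳) (ID IS Y : Ω → ℝ)
    (π s0 s1 p0 yq fX T mq : 𝒳 → ℝ) (P01 : ℝ)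
    (hmX : Measurable X) (hmY : Measurable Y)
    (hmπ : Measurable π) (hms0 : Measurable s0) (hms1 : Measurable s1)
    (hmyq : Measurable yq) (hmT : Measurable T) (hmmq : Measurable mq)
    (hID : ∀ ω, ID ω = 0 ∨ ID ω = 1) (hIS : ∀ ω, IS ω = 0 ∨ IS ω = 1)
    (hπ : ∀ x, 0 < π x ∧ π x < 1)
    (hs1 : ∀ x, 0 < s1 x)
    (hp0 : ∀ x, p0 x = s0 x / s1 x) (hp0' : ∀ x, 0 < p0 x ∧ p0 x ≤ 1)
    (hYbd : ∃ C, ∀ ω, |Y ω| ≤ C) (hTbd : ∃ C, ∀ x, |T x| ≤ C)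
    (hmqbd : ∃ C, ∀ x, |mq x| ≤ C)
    (hP01 : P01 = ∫ ω, (1 - ID ω) * IS ω ∂μ) (hP01pos : 0 < P01)
    -- conditional-probability (tower) identities given `X`:
    (hD1S1 : ∀ g : 𝒳 → ℝ, Measurable g → (∃ C, ∀ x, |g x| ≤ C) →
      ∫ ω, ID ω * IS ω * g (X ω) ∂μ = ∫ ω, π (X ω) * s1 (X ω) * g (X ω) ∂μ)
    (hD0S1 : ∀ g : 𝒳 → ℝ, Measurable g → (∃ C, ∀ x, |g x| ≤ C) →
      ∫ ω, (1 - ID ω) * IS ω * g (X ω) ∂μ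
        = ∫ ω, (1 - π (X ω)) * s0 (X ω) * g (X ω) ∂μ)
    -- `yq(x)` is the conditional `p₀(x)`-quantile of `Y` given `D=1, S=1, X=x`:
    (hquant : ∀ g : 𝒳 → ℝ, Measurable g → (∃ C, ∀ x, |g x| ≤ C) →
      ∫ ω, ID ω * IS ω * (if Y ω ≤ yq (X ω) then (1:ℝ) else 0) * g (X ω) ∂μ
        = ∫ ω, ID ω * IS ω * p0 (X ω) * g (X ω) ∂μ)
    -- `mq(x)` is the truncated conditional mean of `Y` given `D=1, S=1, X=x`:
    (hmq : ∀ g : 𝒳 → ℝ, Measurable g → (∃ C, ∀ x, |g x| ≤ C) →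
      ∫ ω, ID ω * IS ω * Y ω * (if Y ω ≤ yq (X ω) then (1:ℝ) else 0) * g (X ω) ∂μ
        = ∫ ω, ID ω * IS ω * mq (X ω) * g (X ω) ∂μ)
    (hT : ∀ x, T x = mq x / p0 x)
    -- `fX` is the `ν`-density of `X` given `D=0, S=1`:
    (hfX : ∀ g : 𝒳 → ℝ, Measurable g → (∃ C, ∀ x, |g x| ≤ C) →
      ∫ ω, (1 - ID ω) * IS ω * g (X ω) ∂μ = P01 * ∫ x, g x * fX x ∂ν)
    (hintLHS : Integrable (fun x => fX x * T x) ν)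
    (hintRHS : Integrable (fun ω => ID ω * IS ω * Y ω *
      (if Y ω ≤ yq (X ω) then (1:ℝ) else 0) * (1 - π (X ω))
        / (P01 * π (X ω))) μ) :
    ∫ x, fX x * T x ∂ν
      = ∫ ω, ID ω * IS ω * Y ω * (if Y ω ≤ yq (X ω) then (1:ℝ) else 0) *
          (1 - π (X ω)) / (P01 * π (X ω)) ∂μ :=
  stmt_12_general μ ν X ID IS Y π s0 s1 p0 yq fX T mq P01 hmX hmπ hmT hmmq hπ hs1 hp0 hp0' hTbd
    hmqbd hP01pos hD1S1 hD0S1 hmq hT hfX hintLHS hintRHS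
end

section
/- (Support function of the one-dimensional identified interval.) Let V be a real random variable with P(V = 0) = 0 and E[V²] = σ² > 0, and let Y_L ≤ Y_U be integrable with VY_L, VY_U integrable. Define 𝓑 = {σ⁻² E[V Y'] : Y_L ≤ Y' ≤ Y_U a.s.}. Then 𝓑 = [β_L, β_U] where β_U = σ⁻² E[V(Y_L + (Y_U−Y_L)1{V>0})] and β_L = σ⁻² E[V(Y_L + (Y_U−Y_L)1{V<0})], and β_L ≤ β_U. -/
/-!
Pointwise, `y ↦ v * y` on `[a, b]` is maximised at `b` when `v > 0` and at `a` otherwise, and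
minimised the other way round; integrating, the two bang-bang selections bound `E[V Y']` for every
selection `Y'`. The set of selections is convex and `Y' ↦ E[V Y']` is affine on it, so its image
is a convex subset of `ℝ` containing both bounds, hence the whole interval between them.
-/

open MeasureTheory Set

section Pointwise

variable {α : Type*} [Ring α] [LinearOrder α] [IsStrictOrderedRing α] {v y a b : α}

lemma mul_mem_uIcc_mul (ha : a ≤ y) (hb : y ≤ b) : v * y ∈ uIcc (v * a) (v * b) := by
  rcases le_total 0 v with hv | hv
  · exact mem_uIcc_of_le (mul_le_mul_of_nonneg_left ha hv) (mul_le_mul_of_nonneg_left hb hv)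
  · exact mem_uIcc_of_ge (mul_le_mul_of_nonpos_left hb hv) (mul_le_mul_of_nonpos_left ha hv)

lemma mul_le_mul_add_ite_pos (ha : a ≤ y) (hb : y ≤ b) :
    v * y ≤ v * (a + (b - a) * if 0 < v then 1 else 0) := by
  split_ifs with hv
  · simpa using mul_le_mul_of_nonneg_left hb hv.le
  · simpa using mul_le_mul_of_nonpos_left ha (not_lt.mp hv)

lemma mul_add_ite_neg_le_mul (ha : a ≤ y) (hb : y ≤ b) :
    v * (a + (b - a) * if v < 0 then 1 else 0) ≤ v * y := by
  split_ifs with hv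
  · simpa using mul_le_mul_of_nonpos_left hb hv.le
  · simpa using mul_le_mul_of_nonneg_left ha (not_lt.mp hv)

end Pointwise

section Selections

variable {Ω : Type*} [MeasurableSpace Ω] {μ : Measure Ω} {V YL YU : Ω → ℝ}

variable (μ YL YU) in
def selections : Set (Ω → ℝ) :=
  {Y' | Measurable Y' ∧ ∀ᵐ ω ∂μ, YL ω ≤ Y' ω ∧ Y' ω ≤ YU ω}

variable (V YL YU) in
noncomputable def upperSelection (ω : Ω) : ℝ :=
  YL ω + (YU ω - YL ω) * if 0 < V ω then 1 else 0

variable (V YL YU) in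
noncomputable def lowerSelection (ω : Ω) : ℝ :=
  YL ω + (YU ω - YL ω) * if V ω < 0 then 1 else 0

lemma convex_selections : Convex ℝ (selections μ YL YU) := by
  rintro Y₁ ⟨hm₁, h₁⟩ Y₂ ⟨hm₂, h₂⟩ s t hs ht hst
  refine ⟨(hm₁.const_smul s).add (hm₂.const_smul t), ?_⟩
  filter_upwards [h₁, h₂] with ω ⟨hL₁, hU₁⟩ ⟨hL₂, hU₂⟩
  exact convex_Icc (YL ω) (YU ω) ⟨hL₁, hU₁⟩ ⟨hL₂, hU₂⟩ hs ht hst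

lemma upperSelection_mem_selections (hmV : Measurable V) (hmL : Measurable YL)
    (hmU : Measurable YU) (hLU : ∀ᵐ ω ∂μ, YL ω ≤ YU ω) :
    upperSelection V YL YU ∈ selections μ YL YU := by
  refine ⟨hmL.add ((hmU.sub hmL).mul
    (Measurable.ite (measurableSet_lt measurable_const hmV) measurable_const measurable_const)), ?_⟩
  filter_upwards [hLU] with ω hω
  unfold upperSelection
  split_ifs <;> constructor <;> linarith

lemma lowerSelection_mem_selections (hmV : Measurable V) (hmL : Measurable YL)
    (hmU : Measurable YU) (hLU : ∀ᵐ ω ∂μ, YL ω ≤ YU ω) :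
    lowerSelection V YL YU ∈ selections μ YL YU := by
  refine ⟨hmL.add ((hmU.sub hmL).mul
    (Measurable.ite (measurableSet_lt hmV measurable_const) measurable_const measurable_const)), ?_⟩
  filter_upwards [hLU] with ω hω
  unfold lowerSelection
  split_ifs <;> constructor <;> linarith

variable (hmV : Measurable V) (hintL : Integrable (fun ω => V ω * YL ω) μ)
  (hintU : Integrable (fun ω => V ω * YU ω) μ)
include hmV hintL hintU

lemma integrable_mul_of_mem_selections {Y' : Ω → ℝ} (hY : Y' ∈ selections μ YL YU) :
    Integrable (fun ω => V ω * Y' ω) μ := by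
  obtain ⟨hmY, hbounds⟩ := hY
  have hmem : ∀ᵐ ω ∂μ, V ω * Y' ω ∈ uIcc (V ω * YL ω) (V ω * YU ω) := by
    filter_upwards [hbounds] with ω ⟨hL, hU⟩ using mul_mem_uIcc_mul hL hU
  refine integrable_of_le_of_le (hmV.mul hmY).aestronglyMeasurable ?_ ?_
    (hintL.inf hintU) (hintL.sup hintU)
  · filter_upwards [hmem] with ω h using h.1
  · filter_upwards [hmem] with ω h using h.2

lemma convex_image_integral_mul_selections (c : ℝ) :
    Convex ℝ ((fun Y' => c * ∫ ω, V ω * Y' ω ∂μ) '' selections μ YL YU) := by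
  rintro _ ⟨Y₁, hY₁, rfl⟩ _ ⟨Y₂, hY₂, rfl⟩ s t hs ht hst
  refine ⟨s • Y₁ + t • Y₂, convex_selections hY₁ hY₂ hs ht hst, ?_⟩
  have hsplit : (fun ω => V ω * (s • Y₁ + t • Y₂) ω)
      = fun ω => s * (V ω * Y₁ ω) + t * (V ω * Y₂ ω) := by
    funext ω; simp only [Pi.add_apply, Pi.smul_apply, smul_eq_mul]; ring
  simp only [hsplit, smul_eq_mul]
  rw [integral_add ((integrable_mul_of_mem_selections hmV hintL hintU hY₁).const_mul s)
    ((integrable_mul_of_mem_selections hmV hintL hintU hY₂).const_mul t),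
    integral_const_mul, integral_const_mul]
  ring

variable (hmL : Measurable YL) (hmU : Measurable YU) (hLU : ∀ᵐ ω ∂μ, YL ω ≤ YU ω)
include hmL hmU hLU

lemma integral_mul_le_integral_mul_upperSelection {Y' : Ω → ℝ}
    (hY : Y' ∈ selections μ YL YU) :
    ∫ ω, V ω * Y' ω ∂μ ≤ ∫ ω, V ω * upperSelection V YL YU ω ∂μ := by
  refine integral_mono_ae (integrable_mul_of_mem_selections hmV hintL hintU hY)
    (integrable_mul_of_mem_selections hmV hintL hintU
      (upperSelection_mem_selections hmV hmL hmU hLU)) ?_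
  filter_upwards [hY.2] with ω ⟨hL, hU⟩ using mul_le_mul_add_ite_pos hL hU

lemma integral_mul_lowerSelection_le_integral_mul {Y' : Ω → ℝ}
    (hY : Y' ∈ selections μ YL YU) :
    ∫ ω, V ω * lowerSelection V YL YU ω ∂μ ≤ ∫ ω, V ω * Y' ω ∂μ := by
  refine integral_mono_ae (integrable_mul_of_mem_selections hmV hintL hintU
      (lowerSelection_mem_selections hmV hmL hmU hLU))
    (integrable_mul_of_mem_selections hmV hintL hintU hY) ?_
  filter_upwards [hY.2] with ω ⟨hL, hU⟩ using mul_add_ite_neg_le_mul hL hU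

lemma image_integral_mul_selections {c : ℝ} (hc : 0 ≤ c) :
    (fun Y' => c * ∫ ω, V ω * Y' ω ∂μ) '' selections μ YL YU
      = Icc (c * ∫ ω, V ω * lowerSelection V YL YU ω ∂μ)
          (c * ∫ ω, V ω * upperSelection V YL YU ω ∂μ) := by
  refine Subset.antisymm ?_ ?_
  · rintro _ ⟨Y', hY, rfl⟩
    exact ⟨mul_le_mul_of_nonneg_left
        (integral_mul_lowerSelection_le_integral_mul hmV hintL hintU hmL hmU hLU hY) hc,
      mul_le_mul_of_nonneg_left
        (integral_mul_le_integral_mul_upperSelection hmV hintL hintU hmL hmU hLU hY) hc⟩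
  · exact (convex_image_integral_mul_selections hmV hintL hintU c).ordConnected.out
      (mem_image_of_mem _ (lowerSelection_mem_selections hmV hmL hmU hLU))
      (mem_image_of_mem _ (upperSelection_mem_selections hmV hmL hmU hLU))

end Selections

theorem stmt_14_general {Ω : Type*} [MeasurableSpace Ω] (μ : Measure Ω)
    (V YL YU : Ω → ℝ)
    (hmV : Measurable V) (hmL : Measurable YL) (hmU : Measurable YU)
    (hLU : ∀ᵐ ω ∂μ, YL ω ≤ YU ω)
    (hintL : Integrable (fun ω => V ω * YL ω) μ)
    (hintU : Integrable (fun ω => V ω * YU ω) μ) :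
    {r : ℝ | ∃ Y' : Ω → ℝ, Measurable Y' ∧
        (∀ᵐ ω ∂μ, YL ω ≤ Y' ω ∧ Y' ω ≤ YU ω) ∧
        r = (∫ ω, V ω ^ 2 ∂μ)⁻¹ * ∫ ω, V ω * Y' ω ∂μ}
      = Set.Icc
        ((∫ ω, V ω ^ 2 ∂μ)⁻¹ *
          ∫ ω, V ω * (YL ω + (YU ω - YL ω) * (if V ω < 0 then (1:ℝ) else 0)) ∂μ)
        ((∫ ω, V ω ^ 2 ∂μ)⁻¹ *
          ∫ ω, V ω * (YL ω + (YU ω - YL ω) * (if 0 < V ω then (1:ℝ) else 0)) ∂μ)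
    ∧ (∫ ω, V ω ^ 2 ∂μ)⁻¹ *
          ∫ ω, V ω * (YL ω + (YU ω - YL ω) * (if V ω < 0 then (1:ℝ) else 0)) ∂μ
        ≤ (∫ ω, V ω ^ 2 ∂μ)⁻¹ *
          ∫ ω, V ω * (YL ω + (YU ω - YL ω) * (if 0 < V ω then (1:ℝ) else 0)) ∂μ := by
  have hc : 0 ≤ (∫ ω, V ω ^ 2 ∂μ)⁻¹ :=
    inv_nonneg.mpr (integral_nonneg fun ω => sq_nonneg (V ω))
  refine ⟨Eq.trans ?_ (image_integral_mul_selections hmV hintL hintU hmL hmU hLU hc), ?_⟩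
  · ext r
    simp only [selections, mem_ofPred_eq, mem_image, and_assoc, eq_comm (a := r)]
  · exact mul_le_mul_of_nonneg_left (integral_mul_lowerSelection_le_integral_mul hmV hintL hintU
      hmL hmU hLU (upperSelection_mem_selections hmV hmL hmU hLU)) hc

/-- Support function of the one-dimensional identified interval: with
`P(V = 0) = 0` and `σ² = E[V²] > 0`, the identified set
`𝓑 = {σ⁻² E[V Y'] : Y_L ≤ Y' ≤ Y_U a.s.}` is the closed interval `[β_L, β_U]` where
`β_U = σ⁻² E[V (Y_L + (Y_U − Y_L)1{V>0})]`, `β_L = σ⁻² E[V (Y_L + (Y_U − Y_L)1{V<0})]`,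
and `β_L ≤ β_U`. -/
theorem stmt_14 {Ω : Type*} [MeasurableSpace Ω] (μ : Measure Ω) [IsProbabilityMeasure μ]
    (V YL YU : Ω → ℝ)
    (hmV : Measurable V) (hmL : Measurable YL) (hmU : Measurable YU)
    (hz0 : μ {ω | V ω = 0} = 0)
    (hV2 : Integrable (fun ω => V ω ^ 2) μ)
    (hσ : 0 < ∫ ω, V ω ^ 2 ∂μ)
    (hLU : ∀ᵐ ω ∂μ, YL ω ≤ YU ω)
    (hintL : Integrable (fun ω => V ω * YL ω) μ)
    (hintU : Integrable (fun ω => V ω * YU ω) μ) :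
    {r : ℝ | ∃ Y' : Ω → ℝ, Measurable Y' ∧
        (∀ᵐ ω ∂μ, YL ω ≤ Y' ω ∧ Y' ω ≤ YU ω) ∧
        r = (∫ ω, V ω ^ 2 ∂μ)⁻¹ * ∫ ω, V ω * Y' ω ∂μ}
      = Set.Icc
        ((∫ ω, V ω ^ 2 ∂μ)⁻¹ *
          ∫ ω, V ω * (YL ω + (YU ω - YL ω) * (if V ω < 0 then (1:ℝ) else 0)) ∂μ)
        ((∫ ω, V ω ^ 2 ∂μ)⁻¹ *
          ∫ ω, V ω * (YL ω + (YU ω - YL ω) * (if 0 < V ω then (1:ℝ) else 0)) ∂μ)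
    ∧ (∫ ω, V ω ^ 2 ∂μ)⁻¹ *
          ∫ ω, V ω * (YL ω + (YU ω - YL ω) * (if V ω < 0 then (1:ℝ) else 0)) ∂μ
        ≤ (∫ ω, V ω ^ 2 ∂μ)⁻¹ *
          ∫ ω, V ω * (YL ω + (YU ω - YL ω) * (if 0 < V ω then (1:ℝ) else 0)) ∂μ :=
  stmt_14_general μ V YL YU hmV hmL hmU hLU hintL hintU
end
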